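/- Let A ∈ ℝ^{n×m}, let τ > 0, and define the double-softmax fixed-point map T : ℝᵐ → ℝᵐ by T(y) = σ_{1/τ}(Aᵀ σ_{1/τ}(−A y)), where σ_{1/τ} denotes softmax with inverse temperature 1/τ (applied in ℝⁿ and ℝᵐ respectively). Then for every 1 ≤ p ≤ ∞ and all y₁, y₂ ∈ ℝᵐ, ‖T(y₁) − T(y₂)‖_p ≤ (‖Aᵀ‖_p ‖A‖_p / (4τ²)) ‖y₁ − y₂‖_p, where ‖A‖_p denotes the ℓ_p-induced operator norm. In particular, in the ℓ₂ norm, T is Lipschitz with constant ‖A‖₂² / (4τ²). -/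

import Mathlib

/-!
At a point with value `s = σ_λ(x)`, the Jacobian of softmax is `λ (diag s - s sᵀ)`. Since `s` is a
probability vector, every row and every column of `diag s - s sᵀ` has absolute sum
`2 sᵢ (1 - sᵢ) ≤ 1/2`, so by the Schur test (Hölder's inequality applied row by row) its
`ℓ_p`-operator norm is at most `1/2` for every `p ∈ [1, ∞]`. By the mean value theorem `σ_λ` is then
`|λ|/2`-Lipschitz in `ℓ_p`, and `T = σ_λ ∘ Aᵀ ∘ σ_λ ∘ (-A)` picks up the factor
`‖Aᵀ‖_p ‖A‖_p λ² / 4`. For `p = 2` one has `‖Aᵀ‖₂ = ‖A‖₂`.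
-/

open scoped ENNReal BigOperators

/-- The softmax function with inverse temperature `lam`. -/
noncomputable def softmax {n : ℕ} (lam : ℝ) (x : Fin n → ℝ) : Fin n → ℝ :=
  fun i => Real.exp (lam * x i) / ∑ j, Real.exp (lam * x j)

/-- The ℓ_p norm on `Fin n → ℝ`, for `p ∈ [1, ∞]`. -/
noncomputable def lpNorm {n : ℕ} (p : ℝ≥0∞) (x : Fin n → ℝ) : ℝ :=
  if p = ⊤ then ⨆ i, |x i| else (∑ i, |x i| ^ p.toReal) ^ (1 / p.toReal)

/-- The ℓ_p-induced operator norm of a matrix. -/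
noncomputable def opNorm {n m : ℕ} (p : ℝ≥0∞) (A : Matrix (Fin n) (Fin m) ℝ) : ℝ :=
  ⨆ v : {v : Fin m → ℝ // v ≠ 0}, lpNorm p (A.mulVec v.val) / lpNorm p v.val

/-- The matrix `Diag(s) - s sᵀ` (Jacobian of softmax with `lam = 1` at a point with value `s`). -/
noncomputable def softmaxJac {n : ℕ} (s : Fin n → ℝ) : Matrix (Fin n) (Fin n) ℝ :=
  Matrix.diagonal s - Matrix.vecMulVec s s

/-- The open (interior of the) probability simplex. -/
def openSimplex (n : ℕ) : Set (Fin n → ℝ) :=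
  {u | (∀ i, 0 < u i) ∧ ∑ i, u i = 1}

/-- The (closed) probability simplex. -/
def probSimplex (n : ℕ) : Set (Fin n → ℝ) :=
  {u | (∀ i, 0 ≤ u i) ∧ ∑ i, u i = 1}

open Finset Real Matrix

section LpNorm

variable {k l : ℕ}

lemma lpNorm_neg (p : ℝ≥0∞) (x : Fin k → ℝ) : lpNorm p (-x) = lpNorm p x := by
  simp [lpNorm]

variable (p : ℝ≥0∞) [Fact (1 ≤ p)]

lemma lpNorm_eq_norm_toLp (x : Fin k → ℝ) : lpNorm p x = ‖WithLp.toLp p x‖ := by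
  rcases eq_or_ne p ⊤ with rfl | hp
  · simp [lpNorm, PiLp.norm_eq_ciSup]
  · have hp0 : 0 < p.toReal :=
      ENNReal.toReal_pos (zero_lt_one.trans_le (Fact.out : 1 ≤ p)).ne' hp
    simp [lpNorm, hp, PiLp.norm_eq_sum hp0]

lemma lpNorm_nonneg (x : Fin k → ℝ) : 0 ≤ lpNorm p x :=
  lpNorm_eq_norm_toLp p x ▸ norm_nonneg _

lemma lpNorm_pos {x : Fin k → ℝ} (hx : x ≠ 0) : 0 < lpNorm p x := by
  simpa [lpNorm_eq_norm_toLp] using hx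

lemma lpNorm_smul (c : ℝ) (x : Fin k → ℝ) : lpNorm p (c • x) = |c| * lpNorm p x := by
  rw [lpNorm_eq_norm_toLp, lpNorm_eq_norm_toLp, WithLp.toLp_smul, norm_smul, Real.norm_eq_abs]

theorem lpNorm_sub_le_of_hasFDerivAt {f : (Fin k → ℝ) → Fin l → ℝ}
    {f' : (Fin k → ℝ) → (Fin k → ℝ) →L[ℝ] Fin l → ℝ} {C : ℝ} (hC : 0 ≤ C)
    (hf : ∀ x, HasFDerivAt f (f' x) x) (hf' : ∀ x v, lpNorm p (f' x v) ≤ C * lpNorm p v)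
    (x y : Fin k → ℝ) : lpNorm p (f x - f y) ≤ C * lpNorm p (x - y) := by
  let e := (PiLp.continuousLinearEquiv p ℝ fun _ : Fin k => ℝ).toContinuousLinearMap
  let e' := (PiLp.continuousLinearEquiv p ℝ fun _ : Fin l => ℝ).symm.toContinuousLinearMap
  have hF : ∀ z, HasFDerivAt (e' ∘ f ∘ e) (e'.comp ((f' (e z)).comp e)) z :=
    fun z => e'.hasFDerivAt.comp z ((hf (e z)).comp z e.hasFDerivAt)
  have hF' : ∀ z, ‖e'.comp ((f' (e z)).comp e)‖ ≤ C := fun z =>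
    ContinuousLinearMap.opNorm_le_bound _ hC fun w => by
      simpa [e, e', PiLp.coe_continuousLinearEquiv, lpNorm_eq_norm_toLp] using hf' (e z) (e w)
  have := convex_univ.norm_image_sub_le_of_norm_hasFDerivWithin_le
    (fun z _ => (hF z).hasFDerivWithinAt) (fun z _ => hF' z)
    (Set.mem_univ (WithLp.toLp p y)) (Set.mem_univ (WithLp.toLp p x))
  simpa [e, e', PiLp.coe_continuousLinearEquiv, lpNorm_eq_norm_toLp] using this

end LpNorm

section OpNorm

variable {n m : ℕ}

lemma opNorm_neg (p : ℝ≥0∞) (A : Matrix (Fin n) (Fin m) ℝ) : opNorm p (-A) = opNorm p A := by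
  simp only [opNorm, neg_mulVec, lpNorm_neg]

variable (p : ℝ≥0∞) [Fact (1 ≤ p)] (A : Matrix (Fin n) (Fin m) ℝ)

lemma opNorm_nonneg : 0 ≤ opNorm p A :=
  Real.iSup_nonneg fun _ => div_nonneg (lpNorm_nonneg p _) (lpNorm_nonneg p _)

lemma lpNorm_mulVec_div_le_norm_toLpLin (v : Fin m → ℝ) :
    lpNorm p (A *ᵥ v) / lpNorm p v ≤ ‖(toLpLin p p A).toContinuousLinearMap‖ := by
  rw [lpNorm_eq_norm_toLp, lpNorm_eq_norm_toLp]
  exact div_le_of_le_mul₀ (norm_nonneg _) (norm_nonneg _)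
    ((toLpLin p p A).toContinuousLinearMap.le_opNorm (WithLp.toLp p v))

lemma lpNorm_mulVec_le (v : Fin m → ℝ) : lpNorm p (A *ᵥ v) ≤ opNorm p A * lpNorm p v := by
  rcases eq_or_ne v 0 with rfl | hv
  · simp [lpNorm_eq_norm_toLp]
  have hbdd : BddAbove (Set.range fun w : {w : Fin m → ℝ // w ≠ 0} =>
      lpNorm p (A *ᵥ w.1) / lpNorm p w.1) :=
    ⟨_, Set.forall_mem_range.2 fun w => lpNorm_mulVec_div_le_norm_toLpLin p A w.1⟩
  exact (div_le_iff₀ (lpNorm_pos p hv)).1 (le_ciSup hbdd ⟨v, hv⟩)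

lemma opNorm_eq_norm_toLpLin : opNorm p A = ‖(toLpLin p p A).toContinuousLinearMap‖ :=
  le_antisymm (Real.iSup_le (fun v => lpNorm_mulVec_div_le_norm_toLpLin p A v.1) (norm_nonneg _))
    (ContinuousLinearMap.opNorm_le_bound _ (opNorm_nonneg p A) fun w => by
      simpa [lpNorm_eq_norm_toLp, toLpLin_apply] using lpNorm_mulVec_le p A w.ofLp)

end OpNorm

open scoped Matrix.Norms.L2Operator in
lemma opNorm_two_transpose {n m : ℕ} (A : Matrix (Fin n) (Fin m) ℝ) :
    opNorm 2 Aᵀ = opNorm 2 A := by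
  have : Fact ((1 : ℝ≥0∞) ≤ 2) := ⟨one_le_two⟩
  rw [opNorm_eq_norm_toLpLin, opNorm_eq_norm_toLpLin, ← conjTranspose_eq_transpose_of_trivial]
  exact l2_opNorm_conjTranspose A

lemma rpow_inner_le_weight_mul_Lp {ι : Type*} (s : Finset ι) {r : ℝ} (hr : 1 ≤ r) (w f : ι → ℝ)
    (hw : ∀ i, 0 ≤ w i) (hf : ∀ i, 0 ≤ f i) :
    (∑ i ∈ s, w i * f i) ^ r ≤ (∑ i ∈ s, w i) ^ (r - 1) * ∑ i ∈ s, w i * f i ^ r := by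
  have hW : 0 ≤ ∑ i ∈ s, w i := sum_nonneg fun i _ => hw i
  have hWf : 0 ≤ ∑ i ∈ s, w i * f i ^ r :=
    sum_nonneg fun i _ => mul_nonneg (hw i) (rpow_nonneg (hf i) r)
  have hr0 : r ≠ 0 := by positivity
  calc (∑ i ∈ s, w i * f i) ^ r
      ≤ ((∑ i ∈ s, w i) ^ (1 - r⁻¹) * (∑ i ∈ s, w i * f i ^ r) ^ r⁻¹) ^ r := by
        gcongr
        · exact sum_nonneg fun i _ => mul_nonneg (hw i) (hf i)
        · exact inner_le_weight_mul_Lp_of_nonneg s hr w f hw hf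
    _ = (∑ i ∈ s, w i) ^ (r - 1) * ∑ i ∈ s, w i * f i ^ r := by
        rw [mul_rpow (by positivity) (by positivity), ← rpow_mul hW, ← rpow_mul hWf,
          inv_mul_cancel₀ hr0, rpow_one, sub_mul, one_mul, inv_mul_cancel₀ hr0]

section SchurTest

variable {k l : ℕ} (B : Matrix (Fin k) (Fin l) ℝ) {c : ℝ}

lemma abs_mulVec_le (v : Fin l → ℝ) (i : Fin k) : |(B *ᵥ v) i| ≤ ∑ j, |B i j| * |v j| := by
  simpa only [mulVec, dotProduct, abs_mul] using abs_sum_le_sum_abs (fun j => B i j * v j) univ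

lemma lpNorm_top_mulVec_le (hc : 0 ≤ c) (hrow : ∀ i, ∑ j, |B i j| ≤ c) (v : Fin l → ℝ) :
    lpNorm ⊤ (B *ᵥ v) ≤ c * lpNorm ⊤ v := by
  simp only [lpNorm, if_true]
  have hv : ∀ j, |v j| ≤ ⨆ j, |v j| := le_ciSup (Set.finite_range _).bddAbove
  have hM : 0 ≤ ⨆ j, |v j| := Real.iSup_nonneg fun j => abs_nonneg _
  refine Real.iSup_le (fun i => ?_) (mul_nonneg hc hM)
  calc |(B *ᵥ v) i| ≤ ∑ j, |B i j| * |v j| := abs_mulVec_le B v i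
    _ ≤ ∑ j, |B i j| * ⨆ j, |v j| := by gcongr with j; exact hv j
    _ = (∑ j, |B i j|) * ⨆ j, |v j| := (sum_mul ..).symm
    _ ≤ c * ⨆ j, |v j| := by gcongr; exact hrow i

lemma lpNorm_mulVec_le_of_ne_top {p : ℝ≥0∞} (hp : 1 ≤ p) (hp_top : p ≠ ⊤) (hc : 0 ≤ c)
    (hrow : ∀ i, ∑ j, |B i j| ≤ c) (hcol : ∀ j, ∑ i, |B i j| ≤ c) (v : Fin l → ℝ) :
    lpNorm p (B *ᵥ v) ≤ c * lpNorm p v := by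
  set r := p.toReal
  have hr : 1 ≤ r := by simpa using ENNReal.toReal_mono hp_top hp
  have hrow_rpow : ∀ i, |(B *ᵥ v) i| ^ r ≤ c ^ (r - 1) * ∑ j, |B i j| * |v j| ^ r := fun i =>
    calc |(B *ᵥ v) i| ^ r ≤ (∑ j, |B i j| * |v j|) ^ r := by gcongr; exact abs_mulVec_le B v i
      _ ≤ (∑ j, |B i j|) ^ (r - 1) * ∑ j, |B i j| * |v j| ^ r :=
        rpow_inner_le_weight_mul_Lp _ hr _ _ (fun _ => abs_nonneg _) (fun _ => abs_nonneg _)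
      _ ≤ c ^ (r - 1) * ∑ j, |B i j| * |v j| ^ r := by gcongr; exact hrow i
  have hsum : ∑ i, |(B *ᵥ v) i| ^ r ≤ c ^ r * ∑ j, |v j| ^ r :=
    calc ∑ i, |(B *ᵥ v) i| ^ r ≤ ∑ i, c ^ (r - 1) * ∑ j, |B i j| * |v j| ^ r :=
          sum_le_sum fun i _ => hrow_rpow i
      _ = c ^ (r - 1) * ∑ j, (∑ i, |B i j|) * |v j| ^ r := by
          rw [← mul_sum, sum_comm]; simp_rw [sum_mul]
      _ ≤ c ^ (r - 1) * ∑ j, c * |v j| ^ r := by gcongr with j; exact hcol j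
      _ = c ^ r * ∑ j, |v j| ^ r := by
          rw [← mul_sum, ← mul_assoc, ← rpow_add_one' hc (by linarith), sub_add_cancel]
  simp only [lpNorm, if_neg hp_top]
  calc (∑ i, |(B *ᵥ v) i| ^ r) ^ (1 / r) ≤ (c ^ r * ∑ j, |v j| ^ r) ^ (1 / r) := by gcongr
    _ = c * (∑ j, |v j| ^ r) ^ (1 / r) := by
        rw [mul_rpow (by positivity) (by positivity), ← rpow_mul hc,
          mul_one_div_cancel (by positivity), rpow_one]

theorem lpNorm_mulVec_le_of_sum_abs_le {p : ℝ≥0∞} (hp : 1 ≤ p) (hc : 0 ≤ c)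
    (hrow : ∀ i, ∑ j, |B i j| ≤ c) (hcol : ∀ j, ∑ i, |B i j| ≤ c) (v : Fin l → ℝ) :
    lpNorm p (B *ᵥ v) ≤ c * lpNorm p v := by
  rcases eq_or_ne p ⊤ with rfl | hp_top
  · exact lpNorm_top_mulVec_le B hc hrow v
  · exact lpNorm_mulVec_le_of_ne_top B hp hp_top hc hrow hcol v

end SchurTest

section Softmax

variable {k : ℕ}

lemma softmax_nonneg (lam : ℝ) (x : Fin k → ℝ) (i : Fin k) : 0 ≤ softmax lam x i := by
  unfold softmax; positivity

lemma sum_softmax_le_one (lam : ℝ) (x : Fin k → ℝ) : ∑ i, softmax lam x i ≤ 1 := by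
  simp only [softmax, ← sum_div]
  exact div_le_one_of_le₀ le_rfl (by positivity)

lemma softmaxJac_transpose (s : Fin k → ℝ) : (softmaxJac s)ᵀ = softmaxJac s := by
  simp [softmaxJac, transpose_sub, transpose_vecMulVec]

lemma softmaxJac_apply (s : Fin k → ℝ) (i j : Fin k) :
    softmaxJac s i j = (if i = j then s i else 0) - s i * s j := by
  simp [softmaxJac, diagonal_apply, vecMulVec_apply]

lemma sum_abs_softmaxJac_row_le {s : Fin k → ℝ} (h0 : ∀ i, 0 ≤ s i) (h1 : ∑ i, s i ≤ 1)
    (i : Fin k) : ∑ j, |softmaxJac s i j| ≤ 1 / 2 := by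
  have hsi : s i ≤ 1 := (single_le_sum (fun j _ => h0 j) (mem_univ i)).trans h1
  -- the row sum becomes `s i * ∑ j, s j + s i * (1 - 2 * s i) ≤ 2 * s i * (1 - s i)`
  have hentry : ∀ j,
      |softmaxJac s i j| = s i * s j + if i = j then s i * (1 - 2 * s i) else 0 := by
    intro j
    rw [softmaxJac_apply]
    split_ifs with hij
    · subst hij
      rw [abs_of_nonneg (by nlinarith [mul_nonneg (h0 i) (sub_nonneg.2 hsi)])]
      ring
    · rw [zero_sub, abs_neg, abs_of_nonneg (mul_nonneg (h0 i) (h0 j)), add_zero]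
  rw [sum_congr rfl fun j _ => hentry j, sum_add_distrib, ← mul_sum, sum_ite_eq,
    if_pos (mem_univ i)]
  nlinarith [h0 i, sq_nonneg (2 * s i - 1)]

lemma sum_abs_softmaxJac_col_le {s : Fin k → ℝ} (h0 : ∀ i, 0 ≤ s i) (h1 : ∑ i, s i ≤ 1)
    (j : Fin k) : ∑ i, |softmaxJac s i j| ≤ 1 / 2 := by
  calc ∑ i, |softmaxJac s i j| = ∑ i, |softmaxJac s j i| :=
        sum_congr rfl fun i _ => by rw [← congrFun₂ (softmaxJac_transpose s) i j, transpose_apply]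
    _ ≤ 1 / 2 := sum_abs_softmaxJac_row_le h0 h1 j

lemma softmaxJac_mulVec_apply (s v : Fin k → ℝ) (i : Fin k) :
    (softmaxJac s *ᵥ v) i = s i * (v i - s ⬝ᵥ v) := by
  simp only [softmaxJac, sub_mulVec, vecMulVec_mulVec, op_smul_eq_smul, Pi.sub_apply,
    mulVec_diagonal, Pi.smul_apply, smul_eq_mul]
  ring

theorem hasFDerivAt_softmax (lam : ℝ) (x : Fin k → ℝ) :
    HasFDerivAt (softmax lam)
      (lam • LinearMap.toContinuousLinearMap (toLin' (softmaxJac (softmax lam x)))) x := by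
  rcases isEmpty_or_nonempty (Fin k) with hk | hk
  · rw [Subsingleton.elim (lam • _) 0]
    exact hasFDerivAt_of_subsingleton (softmax lam) x
  have hS : ∑ j, exp (lam * x j) ≠ 0 := (sum_pos (fun j _ => exp_pos _) univ_nonempty).ne'
  have hexp : ∀ i, HasFDerivAt (fun z : Fin k → ℝ => exp (lam * z i))
      (exp (lam * x i) • lam • ContinuousLinearMap.proj i) x :=
    fun i => ((hasFDerivAt_apply i x).const_mul lam).exp
  have hinv := (hasDerivAt_inv hS).comp_hasFDerivAt x (HasFDerivAt.fun_sum fun j _ => hexp j)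
  refine hasFDerivAt_pi'.2 fun i => ?_
  have hfun : (fun z => softmax lam z i) = fun z => exp (lam * z i) * (∑ j, exp (lam * z j))⁻¹ :=
    funext fun z => div_eq_mul_inv _ _
  rw [hfun]
  refine ((hexp i).mul hinv).congr_fderiv ?_
  ext v
  have hdot : softmax lam x ⬝ᵥ v = (∑ j, exp (lam * x j) * v j) / ∑ j, exp (lam * x j) := by
    simp only [dotProduct, softmax, sum_div, div_mul_eq_mul_div]
  simp only [neg_smul, smul_neg, Function.comp_apply, _root_.add_apply, _root_.neg_apply,
    _root_.smul_apply, _root_.sum_apply, ContinuousLinearMap.proj_apply, smul_eq_mul,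
    mul_left_comm _ lam, ← mul_sum, ContinuousLinearMap.comp_smulₛₗ, ringHom_apply,
    ContinuousLinearMap.comp_apply, LinearMap.coe_toContinuousLinearMap', toLin'_apply,
    softmaxJac_mulVec_apply, hdot]
  simp only [softmax]
  field_simp
  ring

theorem lpNorm_softmax_sub_le {p : ℝ≥0∞} (hp : 1 ≤ p) (lam : ℝ) (x y : Fin k → ℝ) :
    lpNorm p (softmax lam x - softmax lam y) ≤ |lam| / 2 * lpNorm p (x - y) := by
  have : Fact (1 ≤ p) := ⟨hp⟩
  refine lpNorm_sub_le_of_hasFDerivAt p (by positivity) (hasFDerivAt_softmax lam)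
    (fun z v => ?_) x y
  have h0 := softmax_nonneg lam z
  have h1 := sum_softmax_le_one lam z
  calc lpNorm p ((lam • LinearMap.toContinuousLinearMap (toLin' (softmaxJac (softmax lam z)))) v)
      = |lam| * lpNorm p (softmaxJac (softmax lam z) *ᵥ v) := lpNorm_smul p lam _
    _ ≤ |lam| * (1 / 2 * lpNorm p v) := by
        gcongr
        exact lpNorm_mulVec_le_of_sum_abs_le _ hp (by norm_num)
          (sum_abs_softmaxJac_row_le h0 h1) (sum_abs_softmaxJac_col_le h0 h1) v
    _ = |lam| / 2 * lpNorm p v := by ring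

theorem lpNorm_softmax_mulVec_sub_le {p : ℝ≥0∞} (hp : 1 ≤ p) (lam : ℝ) {l : ℕ}
    (B : Matrix (Fin k) (Fin l) ℝ) (x y : Fin l → ℝ) :
    lpNorm p (softmax lam (B *ᵥ x) - softmax lam (B *ᵥ y)) ≤
      |lam| / 2 * opNorm p B * lpNorm p (x - y) := by
  have : Fact (1 ≤ p) := ⟨hp⟩
  calc lpNorm p (softmax lam (B *ᵥ x) - softmax lam (B *ᵥ y))
      ≤ |lam| / 2 * lpNorm p (B *ᵥ (x - y)) := by
        rw [mulVec_sub]; exact lpNorm_softmax_sub_le hp lam _ _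
    _ ≤ |lam| / 2 * (opNorm p B * lpNorm p (x - y)) := by
        gcongr; exact lpNorm_mulVec_le p B _
    _ = |lam| / 2 * opNorm p B * lpNorm p (x - y) := by ring

end Softmax

theorem dsfp_lipschitz_general {n m : ℕ} (A : Matrix (Fin n) (Fin m) ℝ) (τ : ℝ) :
    let T : (Fin m → ℝ) → (Fin m → ℝ) :=
      fun y => softmax (1 / τ) (Matrix.mulVec A.transpose (softmax (1 / τ) (-(A.mulVec y))))
    (∀ p : ℝ≥0∞, 1 ≤ p → ∀ y₁ y₂ : Fin m → ℝ,
      lpNorm p (T y₁ - T y₂) ≤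
        (opNorm p A.transpose * opNorm p A / (4 * τ ^ 2)) * lpNorm p (y₁ - y₂)) ∧
    (∀ y₁ y₂ : Fin m → ℝ,
      lpNorm 2 (T y₁ - T y₂) ≤
        (opNorm 2 A ^ 2 / (4 * τ ^ 2)) * lpNorm 2 (y₁ - y₂)) := by
  intro T
  have hT : ∀ p : ℝ≥0∞, 1 ≤ p → ∀ y₁ y₂ : Fin m → ℝ, lpNorm p (T y₁ - T y₂) ≤
      (opNorm p Aᵀ * opNorm p A / (4 * τ ^ 2)) * lpNorm p (y₁ - y₂) := by
    intro p hp y₁ y₂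
    have : Fact (1 ≤ p) := ⟨hp⟩
    have hinner := lpNorm_softmax_mulVec_sub_le hp (1 / τ) (-A) y₁ y₂
    simp only [opNorm_neg, neg_mulVec] at hinner
    have habs : |1 / τ| * |1 / τ| = 1 / τ ^ 2 := by rw [abs_mul_abs_self]; ring
    calc lpNorm p (T y₁ - T y₂)
        ≤ |1 / τ| / 2 * opNorm p Aᵀ *
            lpNorm p (softmax (1 / τ) (-(A *ᵥ y₁)) - softmax (1 / τ) (-(A *ᵥ y₂))) :=
          lpNorm_softmax_mulVec_sub_le hp _ Aᵀ _ _
      _ ≤ |1 / τ| / 2 * opNorm p Aᵀ * (|1 / τ| / 2 * opNorm p A * lpNorm p (y₁ - y₂)) := by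
          have := opNorm_nonneg p Aᵀ
          gcongr
      _ = (opNorm p Aᵀ * opNorm p A / (4 * τ ^ 2)) * lpNorm p (y₁ - y₂) := by
          linear_combination (opNorm p Aᵀ * opNorm p A * lpNorm p (y₁ - y₂) / 4) * habs
  refine ⟨hT, fun y₁ y₂ => ?_⟩
  simpa only [opNorm_two_transpose, sq] using hT 2 one_le_two y₁ y₂

/-- the double-softmax fixed-point map is Lipschitz with constant
`‖Aᵀ‖_p ‖A‖_p / (4τ²)` in every ℓ_p norm; in particular with `‖A‖₂² / (4τ²)` in ℓ₂. -/
theorem dsfp_lipschitz {n m : ℕ} (A : Matrix (Fin n) (Fin m) ℝ) (τ : ℝ) (hτ : 0 < τ) :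
    let T : (Fin m → ℝ) → (Fin m → ℝ) :=
      fun y => softmax (1 / τ) (Matrix.mulVec A.transpose (softmax (1 / τ) (-(A.mulVec y))))
    (∀ p : ℝ≥0∞, 1 ≤ p → ∀ y₁ y₂ : Fin m → ℝ,
      lpNorm p (T y₁ - T y₂) ≤
        (opNorm p A.transpose * opNorm p A / (4 * τ ^ 2)) * lpNorm p (y₁ - y₂)) ∧
    (∀ y₁ y₂ : Fin m → ℝ,
      lpNorm 2 (T y₁ - T y₂) ≤
        (opNorm 2 A ^ 2 / (4 * τ ^ 2)) * lpNorm 2 (y₁ - y₂)) :=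
  dsfp_lipschitz_general A τ
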